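/- For every integer n ≥ 3 and every integer s ≥ 2, a graph G on n vertices is (gn_s ≥ n−1)-saturated if and only if G is isomorphic to the complete graph K_n with one edge removed. Consequently, sat(n, gn_s ≥ n−1) = C(n,2) − 1. -/

import Mathlib

open SimpleGraph

/-- A strategy for the guessing game on `G` with `s` colors: a family of guessing
functions, one per vertex, where each vertex's guess depends only on the colors
of the vertices in its (open) neighborhood. -/
def IsGuessingStrategy {V : Type*} (G : SimpleGraph V) (s : ℕ)
    (f : V → (V → Fin s) → Fin s) : Prop :=
  ∀ (v : V) (c₁ c₂ : V → Fin s), (∀ u, G.Adj v u → c₁ u = c₂ u) → f v c₁ = f v c₂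

/-- The maximum, over all strategies for the guessing game on `G` with `s` colors,
of the number of fixed points of the strategy (colorings where every vertex
guesses its own color correctly). -/
noncomputable def maxFixedPoints {V : Type*} (G : SimpleGraph V) (s : ℕ) : ℕ :=
  sSup {n : ℕ | ∃ f : V → (V → Fin s) → Fin s, IsGuessingStrategy G s f ∧
    n = Nat.card {c : V → Fin s // ∀ v, f v c = c v}}

/-- The guessing number of `G` with `s` colors: the logarithm base `s` of the
maximum number of fixed points of a strategy. -/
noncomputable def guessingNumber {V : Type*} (G : SimpleGraph V) (s : ℕ) : ℝ :=
  Real.logb s (maxFixedPoints G s)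

/-- The join `K_k ⊕ E_{n-k}`: the first `k` vertices form a clique and are joined
to all other vertices; the remaining `n - k` vertices form an independent set. -/
def cliqueJoinEmpty (n k : ℕ) : SimpleGraph (Fin n) :=
  SimpleGraph.fromRel (fun u _ => (u : ℕ) < k)

/-- The extremal number `ex(n, gn_s ≥ a)`: the maximum number of edges over all
graphs on `n` vertices whose guessing number with `s` colors is `< a`. -/
noncomputable def exGN (n s : ℕ) (a : ℝ) : ℕ :=
  sSup {m : ℕ | ∃ G : SimpleGraph (Fin n),
    guessingNumber G s < a ∧ m = Nat.card G.edgeSet}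

/-- `G` is `(gn_s ≥ a)`-saturated: `gn(G,s) < a` but adding any missing edge
raises the guessing number to at least `a`. -/
def GNSaturated {V : Type*} (G : SimpleGraph V) (s : ℕ) (a : ℝ) : Prop :=
  guessingNumber G s < a ∧
    ∀ u w : V, u ≠ w → ¬G.Adj u w →
      a ≤ guessingNumber (G ⊔ SimpleGraph.fromEdgeSet {s(u, w)}) s

/-- The saturation number `sat(n, gn_s ≥ a)`: the minimum number of edges over
all `(gn_s ≥ a)`-saturated graphs on `n` vertices. -/
noncomputable def satGN (n s : ℕ) (a : ℝ) : ℕ :=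
  sInf {m : ℕ | ∃ G : SimpleGraph (Fin n),
    GNSaturated G s a ∧ m = Nat.card G.edgeSet}

/-- The disjoint union `H + E_{n-h}` of a graph `H` on `h` vertices with `n - h`
isolated vertices, realized on `Fin n`. -/
def withIsolated {h : ℕ} (H : SimpleGraph (Fin h)) (n : ℕ) : SimpleGraph (Fin n) :=
  SimpleGraph.fromRel (fun u v =>
    ∃ (hu : (u : ℕ) < h) (hv : (v : ℕ) < h), H.Adj ⟨u, hu⟩ ⟨v, hv⟩)

/-- `K*_{a,a}`: the complete bipartite graph `K_{a,a}` with one subdivided edge.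
Vertices `0, …, a-1` are `x_1, …, x_a`; vertices `a, …, 2a-1` are `y_1, …, y_a`;
vertex `2a` is the subdivision vertex `v_0`, adjacent exactly to `x_1` and `y_1`.
The edge `x_1 y_1` is removed. -/
def Kstar (a : ℕ) : SimpleGraph (Fin (2 * a + 1)) :=
  SimpleGraph.fromRel (fun u v =>
    ((u : ℕ) < a ∧ a ≤ (v : ℕ) ∧ (v : ℕ) < 2 * a ∧ ¬((u : ℕ) = 0 ∧ (v : ℕ) = a)) ∨
    ((u : ℕ) = 2 * a ∧ ((v : ℕ) = 0 ∨ (v : ℕ) = a)))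

/-- Add `b` dominating vertices to a graph `H` on `m` vertices: the first `b`
vertices are adjacent to everything else (and each other), the remaining `m`
vertices induce a copy of `H`. -/
def withDominating {m : ℕ} (H : SimpleGraph (Fin m)) (b : ℕ) :
    SimpleGraph (Fin (b + m)) :=
  SimpleGraph.fromRel (fun u v =>
    (u : ℕ) < b ∨ (v : ℕ) < b ∨
      ∃ (hu : b ≤ (u : ℕ)) (hv : b ≤ (v : ℕ)),
        H.Adj ⟨(u : ℕ) - b, by have := u.isLt; omega⟩
          ⟨(v : ℕ) - b, by have := v.isLt; omega⟩)

/-- `F` is a minimal graph with `gn_s ≥ a`: its guessing number with `s` colors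
is at least `a`, but every proper subgraph has guessing number `< a`. -/
def MinimalGN {V : Type*} [Finite V] (F : SimpleGraph V) (s : ℕ) (a : ℝ) : Prop :=
  a ≤ guessingNumber F s ∧
    ∀ H : F.Subgraph, H ≠ ⊤ → guessingNumber H.coe s < a

/-! If `u` and `w` are distinct and non-adjacent, then neither of them sees `u` or `w`, so a
fixed point of any strategy is determined by its colors off `{u, w}`: there are at most
`s ^ (n - 2)` of them, and `gn(G, s) < n - 1`. On `K_n`, guessing that all colors sum to `0` in
`ℤ/sℤ` has `s ^ (n - 1)` fixed points. So `gn(G, s) ≥ n - 1` exactly when `G = K_n`, and the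
saturated graphs are those with exactly one non-edge. -/

namespace SimpleGraph

variable {V W : Type*} {G : SimpleGraph V}

lemma exists_ne_not_adj_of_ne_top (hG : G ≠ ⊤) : ∃ u w, u ≠ w ∧ ¬G.Adj u w := by
  by_contra! h
  exact hG (eq_top_iff.2 fun u w => h u w)

lemma Iso.eq_top_deleteEdges {e : Sym2 W} (φ : G ≃g (⊤ : SimpleGraph W).deleteEdges {e}) :
    G = (⊤ : SimpleGraph V).deleteEdges {e.map φ.symm} := by
  ext x y
  have hedge : s(x, y) = e.map φ.symm ↔ s(φ x, φ y) = e := by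
    rw [← (Sym2.map.injective φ.injective).eq_iff, Sym2.map_map]
    simp
  rw [← φ.map_adj_iff]
  simp [hedge]

lemma exists_iso_top_deleteEdges_iff :
    (∃ e ∈ (⊤ : SimpleGraph V).edgeSet, Nonempty (G ≃g (⊤ : SimpleGraph V).deleteEdges {e})) ↔
      ∃ e ∈ (⊤ : SimpleGraph V).edgeSet, G = (⊤ : SimpleGraph V).deleteEdges {e} := by
  refine ⟨fun ⟨e, he, ⟨φ⟩⟩ => ⟨e.map φ.symm, ?_, φ.eq_top_deleteEdges⟩,
    fun ⟨e, he, hG⟩ => ⟨e, he, ⟨hG ▸ Iso.refl⟩⟩⟩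
  simpa [Sym2.isDiag_map φ.symm.injective] using he

lemma exists_eq_top_deleteEdges_iff :
    (∃ e ∈ (⊤ : SimpleGraph V).edgeSet, G = (⊤ : SimpleGraph V).deleteEdges {e}) ↔
      G ≠ ⊤ ∧ ∀ u w, u ≠ w → ¬G.Adj u w → G ⊔ fromEdgeSet {s(u, w)} = ⊤ := by
  constructor
  · rintro ⟨e, he, rfl⟩
    refine ⟨fun h => ?_, fun u w huw hna => ?_⟩
    · simpa [edgeSet_deleteEdges] using (congrArg edgeSet h).ge he
    · have hue : s(u, w) = e := by simpa [huw] using hna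
      ext x y
      simp only [sup_adj, deleteEdges_adj, fromEdgeSet_adj, top_adj,
        Set.mem_singleton_iff, hue]
      tauto
  · rintro ⟨hG, hsat⟩
    obtain ⟨u, w, huw, hna⟩ := exists_ne_not_adj_of_ne_top hG
    refine ⟨s(u, w), by simpa using huw, ?_⟩
    ext x y
    simp only [deleteEdges_adj, top_adj, Set.mem_singleton_iff]
    refine ⟨fun h => ⟨h.ne, fun hxy => hna ?_⟩, fun ⟨hxy, hne⟩ => ?_⟩
    · rwa [← mem_edgeSet, ← hxy]
    · have h : (G ⊔ fromEdgeSet {s(u, w)}).Adj x y := (hsat u w huw hna).symm ▸ hxy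
      simpa [hne] using h

lemma card_edgeSet_top_deleteEdges [Fintype V] {e : Sym2 V}
    (he : e ∈ (⊤ : SimpleGraph V).edgeSet) :
    Nat.card ((⊤ : SimpleGraph V).deleteEdges {e}).edgeSet = (Fintype.card V).choose 2 - 1 := by
  classical
  rw [edgeSet_deleteEdges, Nat.card_coe_set_eq, Set.ncard_sdiff_singleton_of_mem he,
    Set.ncard_eq_toFinset_card', Set.toFinset_card, ← edgeFinset_card,
    card_edgeFinset_top_eq_card_choose_two]

end SimpleGraph

open Finset

section GuessingGame

variable {V : Type*} {G : SimpleGraph V} {s : ℕ}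

lemma guessingNumber_le_of_maxFixedPoints_le (hs : 1 < s) {k : ℕ}
    (h : maxFixedPoints G s ≤ s ^ k) : guessingNumber G s ≤ k := by
  have hs' : (1 : ℝ) < s := by exact_mod_cast hs
  rcases (maxFixedPoints G s).eq_zero_or_pos with h0 | hpos
  · simp [guessingNumber, h0]
  · rw [guessingNumber, Real.logb_le_iff_le_rpow hs' (by exact_mod_cast hpos),
      Real.rpow_natCast]
    exact_mod_cast h

lemma le_guessingNumber_of_pow_le (hs : 1 < s) {k : ℕ}
    (h : s ^ k ≤ maxFixedPoints G s) : (k : ℝ) ≤ guessingNumber G s := by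
  have hs' : (1 : ℝ) < s := by exact_mod_cast hs
  have hpos : 0 < maxFixedPoints G s := (pow_pos (by omega) k).trans_le h
  rw [guessingNumber, Real.le_logb_iff_rpow_le hs' (by exact_mod_cast hpos), Real.rpow_natCast]
  exact_mod_cast h

variable [Fintype V] [DecidableEq V]

lemma bddAbove_card_fixedPoints (G : SimpleGraph V) (s : ℕ) :
    BddAbove {m : ℕ | ∃ f : V → (V → Fin s) → Fin s, IsGuessingStrategy G s f ∧
      m = Nat.card {c : V → Fin s // ∀ v, f v c = c v}} := by
  refine ⟨s ^ Fintype.card V, ?_⟩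
  rintro m ⟨f, -, rfl⟩
  simpa [Nat.card_fun] using
    Nat.card_le_card_of_injective (Subtype.val : {c : V → Fin s // ∀ v, f v c = c v} → _)
      Subtype.val_injective

lemma IsGuessingStrategy.card_fixedPoints_le_maxFixedPoints
    {f : V → (V → Fin s) → Fin s} (hf : IsGuessingStrategy G s f) :
    Nat.card {c : V → Fin s // ∀ v, f v c = c v} ≤ maxFixedPoints G s :=
  le_csSup (bddAbove_card_fixedPoints G s) ⟨f, hf, rfl⟩

lemma IsGuessingStrategy.card_fixedPoints_le_of_isIndepSet
    {f : V → (V → Fin s) → Fin s} (hf : IsGuessingStrategy G s f)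
    {S : Finset V} (hS : G.IsIndepSet S) :
    Nat.card {c : V → Fin s // ∀ v, f v c = c v} ≤ s ^ (Fintype.card V - #S) := by
  have hnbr : ∀ v ∈ S, ∀ x, G.Adj v x → x ∉ S := fun v hv x hvx hx =>
    hS (mem_coe.2 hv) (mem_coe.2 hx) hvx.ne hvx
  have hinj : Function.Injective
      (fun (c : {c : V → Fin s // ∀ v, f v c = c v}) (x : {x // x ∉ S}) => c.1 x) := by
    rintro ⟨c₁, hc₁⟩ ⟨c₂, hc₂⟩ h
    have hout : ∀ x ∉ S, c₁ x = c₂ x := fun x hx => congrFun h ⟨x, hx⟩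
    refine Subtype.ext (funext fun v => ?_)
    by_cases hv : v ∈ S
    · dsimp only
      rw [← hc₁ v, ← hc₂ v]
      exact hf v c₁ c₂ fun x hvx => hout x (hnbr v hv x hvx)
    · exact hout v hv
  calc Nat.card {c : V → Fin s // ∀ v, f v c = c v}
      ≤ Nat.card ({x // x ∉ S} → Fin s) := Nat.card_le_card_of_injective _ hinj
    _ = s ^ (Fintype.card V - #S) := by
      simp [Fintype.card_subtype_compl, Fintype.card_coe]

lemma maxFixedPoints_le_of_isIndepSet {S : Finset V} (hS : G.IsIndepSet S) :
    maxFixedPoints G s ≤ s ^ (Fintype.card V - #S) :=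
  csSup_le' fun _ ⟨_, hf, hm⟩ => hm ▸ hf.card_fixedPoints_le_of_isIndepSet hS

lemma guessingNumber_lt_of_not_adj (hs : 1 < s) {u w : V} (huw : u ≠ w)
    (hna : ¬G.Adj u w) : guessingNumber G s < Fintype.card V - 1 := by
  have hS : G.IsIndepSet ({u, w} : Finset V) := by
    rw [SimpleGraph.isIndepSet_iff, Finset.coe_pair, Set.pairwise_pair]
    exact fun _ => ⟨hna, fun h => hna h.symm⟩
  have hcard : 2 ≤ Fintype.card V := by
    simpa [Finset.card_pair huw] using Finset.card_le_univ ({u, w} : Finset V)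
  have := guessingNumber_le_of_maxFixedPoints_le hs (maxFixedPoints_le_of_isIndepSet hS)
  rw [Finset.card_pair huw, Nat.cast_sub hcard, Nat.cast_two] at this
  linarith

variable (V s) in
def negSumStrategy [NeZero s] : V → (V → Fin s) → Fin s :=
  fun v c => -∑ u : {u // u ≠ v}, c u

lemma isGuessingStrategy_negSumStrategy [NeZero s] :
    IsGuessingStrategy (⊤ : SimpleGraph V) s (negSumStrategy V s) :=
  fun _ _ _ h => congrArg Neg.neg (Fintype.sum_congr _ _ fun u => h u (Ne.symm u.2))

lemma negSumStrategy_eq_self_of_sum_eq_zero [NeZero s] {c : V → Fin s}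
    (hc : ∑ v, c v = 0) (v : V) : negSumStrategy V s v c = c v := by
  rw [Fintype.sum_eq_add_sum_subtype_ne c v] at hc
  exact (eq_neg_of_add_eq_zero_left hc).symm

lemma pow_card_sub_one_le_card_fixedPoints_negSumStrategy [NeZero s] (v₀ : V) :
    s ^ (Fintype.card V - 1) ≤
      Nat.card {c : V → Fin s // ∀ v, negSumStrategy V s v c = c v} := by
  let extend (g : {u // u ≠ v₀} → Fin s) : V → Fin s :=
    fun v => if h : v = v₀ then -∑ u, g u else g ⟨v, h⟩
  have hsum (g : {u // u ≠ v₀} → Fin s) : ∑ v, extend g v = 0 := by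
    have hne (u : {u // u ≠ v₀}) : extend g u = g u := dif_neg u.2
    rw [Fintype.sum_eq_add_sum_subtype_ne _ v₀, Fintype.sum_congr _ _ hne]
    simp [extend]
  have hinj : Function.Injective (fun g => (⟨extend g,
      negSumStrategy_eq_self_of_sum_eq_zero (hsum g)⟩ :
        {c : V → Fin s // ∀ v, negSumStrategy V s v c = c v})) := by
    intro g₁ g₂ h
    funext u
    simpa [extend, dif_neg u.2] using congrFun (congrArg Subtype.val h) u.1
  calc s ^ (Fintype.card V - 1) = Nat.card ({u // u ≠ v₀} → Fin s) := by
        simp [Fintype.card_subtype_compl]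
    _ ≤ _ := Nat.card_le_card_of_injective _ hinj

lemma card_sub_one_le_guessingNumber_top [Nonempty V] (hs : 1 < s) :
    (Fintype.card V : ℝ) - 1 ≤ guessingNumber (⊤ : SimpleGraph V) s := by
  have : NeZero s := ⟨by omega⟩
  have h := le_guessingNumber_of_pow_le hs
    ((pow_card_sub_one_le_card_fixedPoints_negSumStrategy (Classical.arbitrary V)).trans
      isGuessingStrategy_negSumStrategy.card_fixedPoints_le_maxFixedPoints)
  rwa [Nat.cast_sub Fintype.card_pos, Nat.cast_one] at h

lemma guessingNumber_lt_iff_ne_top [Nonempty V] (hs : 1 < s) :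
    guessingNumber G s < Fintype.card V - 1 ↔ G ≠ ⊤ := by
  refine ⟨fun h hG => (hG ▸ h).not_ge (card_sub_one_le_guessingNumber_top hs), fun hG => ?_⟩
  obtain ⟨u, w, huw, hna⟩ := exists_ne_not_adj_of_ne_top hG
  exact guessingNumber_lt_of_not_adj hs huw hna

lemma gnSaturated_card_sub_one_iff [Nonempty V] (hs : 1 < s) :
    GNSaturated G s (Fintype.card V - 1) ↔
      ∃ e ∈ (⊤ : SimpleGraph V).edgeSet, G = (⊤ : SimpleGraph V).deleteEdges {e} := by
  simp only [exists_eq_top_deleteEdges_iff, GNSaturated, ← not_lt,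
    guessingNumber_lt_iff_ne_top hs, not_not]

end GuessingGame

/-- For `n ≥ 3` and `s ≥ 2`, a graph on `n` vertices is `(gn_s ≥ n-1)`-saturated
iff it is isomorphic to the complete graph `K_n` with one edge removed;
consequently `sat(n, gn_s ≥ n-1) = C(n,2) - 1`. -/
theorem satGN_top (n s : ℕ) (hn : 3 ≤ n) (hs : 2 ≤ s) :
    (∀ G : SimpleGraph (Fin n),
      GNSaturated G s ((n : ℝ) - 1) ↔
        ∃ e ∈ (⊤ : SimpleGraph (Fin n)).edgeSet,
          Nonempty (G ≃g (⊤ : SimpleGraph (Fin n)).deleteEdges {e})) ∧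
    satGN n s ((n : ℝ) - 1) = n.choose 2 - 1 := by
  have : Nonempty (Fin n) := ⟨⟨0, by omega⟩⟩
  have hsat (G : SimpleGraph (Fin n)) : GNSaturated G s ((n : ℝ) - 1) ↔
      ∃ e ∈ (⊤ : SimpleGraph (Fin n)).edgeSet, G = (⊤ : SimpleGraph (Fin n)).deleteEdges {e} := by
    simpa using gnSaturated_card_sub_one_iff (G := G) hs
  refine ⟨fun G => (hsat G).trans exists_iso_top_deleteEdges_iff.symm, ?_⟩
  have he : s(⟨0, by omega⟩, ⟨1, by omega⟩) ∈ (⊤ : SimpleGraph (Fin n)).edgeSet := by simp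
  have hcounts : {m | ∃ G : SimpleGraph (Fin n), GNSaturated G s ((n : ℝ) - 1) ∧
      m = Nat.card G.edgeSet} = {n.choose 2 - 1} := by
    ext m
    simp only [Set.mem_ofPred_eq, hsat, Set.mem_singleton_iff]
    constructor
    · rintro ⟨G, ⟨e, he', rfl⟩, rfl⟩
      simpa using card_edgeSet_top_deleteEdges he'
    · rintro rfl
      exact ⟨_, ⟨_, he, rfl⟩, by simpa using (card_edgeSet_top_deleteEdges he).symm⟩
  rw [satGN, hcounts, csInf_singleton]
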